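/- arXiv:2201.06553 — 4 statements merged into one kernel-verified Lean document; each statement's English description precedes it below -/
import Mathlib

section
/- Let n > 10 be an integer and consider the real line ℝ with the Euclidean metric d(x,y) = |x−y|. Let R = {4^i : i ∈ ℤ, 1 ≤ i ≤ n} and Q = {i ∈ ℤ : 1 ≤ i ≤ 4^n}. Then the expansion constant of R equals n, the expansion constant of Q is at most 4, and consequently the minimized expansion constant of R satisfies c_m(R) ≤ 4. -/
open scoped Classical

/-- The expansion constant `c(R)`: the smallest real `c ≥ 2` such that
`|B̄(p,2t) ∩ R| ≤ c · |B̄(p,t) ∩ R|` for every `p ∈ R` and every `t ≥ 0`. -/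
noncomputable def expansionConstant {X : Type*} [MetricSpace X] (R : Finset X) : ℝ :=
  sInf {c : ℝ | 2 ≤ c ∧ ∀ p ∈ R, ∀ t : ℝ, 0 ≤ t →
    ((R.filter fun x => dist p x ≤ 2 * t).card : ℝ) ≤
      c * ((R.filter fun x => dist p x ≤ t).card : ℝ)}

/-- The minimized expansion constant `c_m(R) = inf { c(A) : R ⊆ A ⊆ X, A finite }`. -/
noncomputable def minExpansionConstant {X : Type*} [MetricSpace X] (R : Finset X) : ℝ :=
  sInf {c : ℝ | ∃ A : Finset X, R ⊆ A ∧ c = expansionConstant A}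

/-- A compressed cover tree on a finite set `R` in a metric space. -/
structure CCT {X : Type*} [MetricSpace X] (R : Finset X) where
  root : X
  root_mem : root ∈ R
  level : X → ℤ
  parent : X → X
  parent_mem : ∀ q ∈ R, q ≠ root → parent q ∈ R
  level_lt_parent : ∀ q ∈ R, q ≠ root → level q < level (parent q)
  covering : ∀ q ∈ R, q ≠ root → dist q (parent q) ≤ (2 : ℝ) ^ (level q + 1)
  reaches_root : ∀ q ∈ R, ∃ n : ℕ, parent^[n] q = root
  root_cond : ∀ p ∈ R, p ≠ root → level p + 1 ≤ level root
  separation : ∀ i : ℤ, ∀ p ∈ R, ∀ q ∈ R, p ≠ q →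
    i ≤ level p → i ≤ level q → (2 : ℝ) ^ i < dist p q

namespace CCT

variable {X : Type*} [MetricSpace X] {R : Finset X}

/-- Descendants of a node `p`: all nodes whose node-to-root path passes through `p`
(including `p` itself). -/
noncomputable def descendants (T : CCT R) (p : X) : Finset X :=
  R.filter fun q => ∃ n : ℕ, T.parent^[n] q = p

/-- Children of a node `p`: the node `p` itself together with all nodes whose parent is `p`. -/
noncomputable def children (T : CCT R) (p : X) : Finset X :=
  insert p (R.filter fun q => q ≠ T.root ∧ T.parent q = p)

/-- `V_i(p) = {u ∈ Descendants(p) : i ≤ l(u) ≤ l(p) − 1}` (empty when `i ≥ l(p)`). -/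
noncomputable def Vset (T : CCT R) (i : ℤ) (p : X) : Finset X :=
  (T.descendants p).filter fun u => i ≤ T.level u ∧ T.level u ≤ T.level p - 1

/-- The distinctive descendant set
`S_i(p, T(R)) = Descendants(p) ∖ ⋃_{u ∈ V_i(p)} Descendants(u)`. -/
noncomputable def SDD (T : CCT R) (i : ℤ) (p : X) : Finset X :=
  T.descendants p \ (T.Vset i p).biUnion T.descendants

/-- `l_min = min_{p ∈ R} l(p)`. -/
noncomputable def lmin (T : CCT R) : ℤ :=
  R.inf' ⟨T.root, T.root_mem⟩ T.level

/-- `l_max = 1 + max_{p ∈ R ∖ {r}} l(p)` (with fallback value `l(r)` for a singleton `R`). -/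
noncomputable def lmax (T : CCT R) : ℤ :=
  if h : (R.erase T.root).Nonempty then 1 + (R.erase T.root).sup' h T.level
  else T.level T.root

/-- The height set `H(T(R)) = {l_max, l_min} ∪ {i : C_{i−1} ∖ C_i ≠ ∅}`; note that
`C_{i−1} ∖ C_i ≠ ∅` holds exactly when some `p ∈ R` has `l(p) = i − 1`. -/
noncomputable def heightSet (T : CCT R) : Finset ℤ :=
  insert T.lmax (insert T.lmin (R.image fun p => T.level p + 1))

/-- `H_i(T(R)) = H(T(R)) ∩ [l_min, i]`. -/
noncomputable def heightSetUpTo (T : CCT R) (i : ℤ) : Finset ℤ :=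
  T.heightSet.filter fun j => T.lmin ≤ j ∧ j ≤ i

/-- The imbalance `I(T(Q), T(R)) = ∑_{q ∈ Q} |H_{l(q)}(T(R))|` of a pair of
compressed cover trees. -/
noncomputable def imbalance {Q : Finset X} (TQ : CCT Q) (TR : CCT R) : ℕ :=
  ∑ q ∈ Q, (TR.heightSetUpTo (TQ.level q)).card

end CCT

lemma dist_nat_le_iff' (k i : ℕ) {s : ℝ} (hs : 0 ≤ s) :
    dist (k : ℝ) (i : ℝ) ≤ s ↔ (k ≤ i + ⌊s⌋₊ ∧ i ≤ k + ⌊s⌋₊) := by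
  rw [Real.dist_eq, abs_sub_le_iff]
  have h1 := Nat.floor_le hs
  have h2 := Nat.lt_floor_add_one s
  constructor
  · rintro ⟨ha, hb⟩
    constructor
    · have hk : (k : ℝ) < ((i + ⌊s⌋₊ + 1 : ℕ) : ℝ) := by push_cast; linarith
      have := Nat.cast_lt.mp hk
      omega
    · have hk : (i : ℝ) < ((k + ⌊s⌋₊ + 1 : ℕ) : ℝ) := by push_cast; linarith
      have := Nat.cast_lt.mp hk
      omega
  · rintro ⟨ha, hb⟩
    have h3 : (k : ℝ) ≤ ((i + ⌊s⌋₊ : ℕ) : ℝ) := by exact_mod_cast ha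
    have h4 : (i : ℝ) ≤ ((k + ⌊s⌋₊ : ℕ) : ℝ) := by exact_mod_cast hb
    push_cast at h3 h4
    constructor <;> linarith

lemma filter_nat_eq' (N k : ℕ) {s : ℝ} (hs : 0 ≤ s) :
    ((Finset.Icc 1 N).filter fun i : ℕ => dist (k : ℝ) (i : ℝ) ≤ s) =
      Finset.Icc (max 1 (k - ⌊s⌋₊)) (min N (k + ⌊s⌋₊)) := by
  ext i
  simp only [Finset.mem_filter, Finset.mem_Icc, dist_nat_le_iff' _ _ hs]
  omega

lemma doubling_nat' (N k : ℕ) (hk1 : 1 ≤ k) (hkN : k ≤ N) {t : ℝ} (ht : 0 ≤ t) :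
    ((Finset.Icc 1 N).filter fun i : ℕ => dist (k : ℝ) (i : ℝ) ≤ 2 * t).card ≤
      4 * ((Finset.Icc 1 N).filter fun i : ℕ => dist (k : ℝ) (i : ℝ) ≤ t).card := by
  have h2t : 0 ≤ 2 * t := by linarith
  rw [filter_nat_eq' N k ht, filter_nat_eq' N k h2t, Nat.card_Icc, Nat.card_Icc]
  have hM : ⌊2 * t⌋₊ ≤ 2 * ⌊t⌋₊ + 1 := by
    have h0 := Nat.lt_floor_add_one t
    have h1 : (2 : ℝ) * t < ((2 * ⌊t⌋₊ + 2 : ℕ) : ℝ) := by push_cast; linarith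
    have := (Nat.floor_lt h2t).mpr h1
    omega
  omega

/-- For `n > 10`, the set `R = {4^i : 1 ≤ i ≤ n} ⊂ ℝ` has expansion constant exactly `n`,
the set `Q = {1, 2, ..., 4^n} ⊂ ℝ` has expansion constant at most `4`, and consequently
the minimized expansion constant of `R` is at most `4`. -/
theorem expansionConstant_example (n : ℕ) (hn : 10 < n) :
    expansionConstant ((Finset.Icc 1 n).image fun i : ℕ => (4 : ℝ) ^ i) = n ∧
    expansionConstant ((Finset.Icc 1 (4 ^ n)).image fun i : ℕ => (i : ℝ)) ≤ 4 ∧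
    minExpansionConstant ((Finset.Icc 1 n).image fun i : ℕ => (4 : ℝ) ^ i) ≤ 4 := by
  set R : Finset ℝ := (Finset.Icc 1 n).image fun i : ℕ => (4 : ℝ) ^ i with hR
  set Q : Finset ℝ := (Finset.Icc 1 (4 ^ n)).image fun i : ℕ => (i : ℝ) with hQ
  have hinj : Function.Injective fun i : ℕ => (4 : ℝ) ^ i := by
    have hsm : StrictMono fun i : ℕ => (4 : ℝ) ^ i :=
      fun a b h => pow_lt_pow_right₀ (by norm_num) h
    exact hsm.injective
  have cardR : R.card = n := by
    rw [hR, Finset.card_image_of_injective _ hinj, Nat.card_Icc]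
    omega
  -- n is in the defining set for R
  have memN : (n : ℝ) ∈ {c : ℝ | 2 ≤ c ∧ ∀ p ∈ R, ∀ t : ℝ, 0 ≤ t →
      ((R.filter fun x => dist p x ≤ 2 * t).card : ℝ) ≤
        c * ((R.filter fun x => dist p x ≤ t).card : ℝ)} := by
    refine ⟨by exact_mod_cast (by omega : 2 ≤ n), ?_⟩
    intro p hp t ht
    have h1 : (R.filter fun x => dist p x ≤ 2 * t).card ≤ n :=
      le_trans (Finset.card_filter_le _ _) cardR.le
    have h2 : 1 ≤ (R.filter fun x => dist p x ≤ t).card := by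
      refine Finset.card_pos.mpr ⟨p, Finset.mem_filter.mpr ⟨hp, by simp [ht]⟩⟩
    have h1' : ((R.filter fun x => dist p x ≤ 2 * t).card : ℝ) ≤ n := by exact_mod_cast h1
    have h2' : (1 : ℝ) ≤ ((R.filter fun x => dist p x ≤ t).card : ℝ) := by exact_mod_cast h2
    have hn0 : (0 : ℝ) ≤ n := by positivity
    nlinarith
  -- n is a lower bound for the defining set for R
  have lbN : ∀ c ∈ {c : ℝ | 2 ≤ c ∧ ∀ p ∈ R, ∀ t : ℝ, 0 ≤ t →
      ((R.filter fun x => dist p x ≤ 2 * t).card : ℝ) ≤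
        c * ((R.filter fun x => dist p x ≤ t).card : ℝ)}, (n : ℝ) ≤ c := by
    rintro c ⟨hc2, hc⟩
    have hp : (4 : ℝ) ^ n ∈ R :=
      Finset.mem_image.mpr ⟨n, Finset.mem_Icc.mpr ⟨by omega, le_refl n⟩, rfl⟩
    have h4n : (4 : ℝ) ≤ 4 ^ n := by
      calc (4 : ℝ) = 4 ^ 1 := (pow_one 4).symm
        _ ≤ 4 ^ n := pow_le_pow_right₀ (by norm_num) (by omega)
    set t : ℝ := ((4 : ℝ) ^ n - 4) / 2 with htdef
    have ht : 0 ≤ t := by rw [htdef]; linarith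
    have key := hc ((4 : ℝ) ^ n) hp t ht
    have hfull : R.filter (fun x => dist ((4:ℝ)^n) x ≤ 2 * t) = R := by
      apply Finset.filter_true_of_mem
      intro x hx
      obtain ⟨i, hi, rfl⟩ := Finset.mem_image.mp hx
      obtain ⟨hi1, hi2⟩ := Finset.mem_Icc.mp hi
      have hle : (4 : ℝ) ^ i ≤ 4 ^ n := pow_le_pow_right₀ (by norm_num) hi2
      have h4i : (4 : ℝ) ≤ 4 ^ i := by
        calc (4 : ℝ) = 4 ^ 1 := (pow_one 4).symm
          _ ≤ 4 ^ i := pow_le_pow_right₀ (by norm_num) hi1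
      rw [Real.dist_eq, abs_of_nonneg (by linarith)]
      rw [htdef]; linarith
    have hsingle : R.filter (fun x => dist ((4:ℝ)^n) x ≤ t) = {(4:ℝ)^n} := by
      apply Finset.eq_singleton_iff_unique_mem.mpr
      refine ⟨Finset.mem_filter.mpr ⟨hp, by simp [ht]⟩, ?_⟩
      intro x hx
      obtain ⟨hxR, hd⟩ := Finset.mem_filter.mp hx
      obtain ⟨i, hi, rfl⟩ := Finset.mem_image.mp hxR
      obtain ⟨hi1, hi2⟩ := Finset.mem_Icc.mp hi
      suffices h : i = n by rw [h]
      by_contra hne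
      have hi' : i ≤ n - 1 := by omega
      have hB : (4 : ℝ) ^ i ≤ 4 ^ (n - 1) := pow_le_pow_right₀ (by norm_num) hi'
      have hA : (4 : ℝ) ^ n = 4 * 4 ^ (n - 1) := by
        rw [← pow_succ']; congr 1; omega
      have hd' : (4 : ℝ) ^ n - 4 ^ i ≤ t := by
        have := le_abs_self ((4 : ℝ) ^ n - 4 ^ i)
        rw [Real.dist_eq] at hd
        linarith
      rw [htdef] at hd'
      have hpos : (0 : ℝ) < 4 ^ (n - 1) := by positivity
      linarith
    rw [hfull, hsingle, cardR] at key
    simpa using key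
  have bddR : BddBelow {c : ℝ | 2 ≤ c ∧ ∀ p ∈ R, ∀ t : ℝ, 0 ≤ t →
      ((R.filter fun x => dist p x ≤ 2 * t).card : ℝ) ≤
        c * ((R.filter fun x => dist p x ≤ t).card : ℝ)} := ⟨(n : ℝ), lbN⟩
  have part1 : expansionConstant R = n :=
    le_antisymm (csInf_le bddR memN) (le_csInf ⟨(n : ℝ), memN⟩ lbN)
  -- Part 2
  have mem4 : (4 : ℝ) ∈ {c : ℝ | 2 ≤ c ∧ ∀ p ∈ Q, ∀ t : ℝ, 0 ≤ t →
      ((Q.filter fun x => dist p x ≤ 2 * t).card : ℝ) ≤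
        c * ((Q.filter fun x => dist p x ≤ t).card : ℝ)} := by
    refine ⟨by norm_num, ?_⟩
    intro p hp t ht
    obtain ⟨k, hk, rfl⟩ := Finset.mem_image.mp hp
    rw [hQ, Finset.filter_image, Finset.filter_image,
      Finset.card_image_of_injective _ Nat.cast_injective,
      Finset.card_image_of_injective _ Nat.cast_injective]
    obtain ⟨hk1, hk2⟩ := Finset.mem_Icc.mp hk
    have := doubling_nat' (4 ^ n) k hk1 hk2 ht
    exact_mod_cast this
  have part2 : expansionConstant Q ≤ 4 :=
    csInf_le ⟨2, fun c hc => hc.1⟩ mem4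
  -- Part 3
  have hsub : R ⊆ Q := by
    intro x hx
    obtain ⟨i, hi, rfl⟩ := Finset.mem_image.mp hx
    obtain ⟨hi1, hi2⟩ := Finset.mem_Icc.mp hi
    refine Finset.mem_image.mpr ⟨4 ^ i, Finset.mem_Icc.mpr
      ⟨Nat.one_le_pow _ _ (by norm_num), Nat.pow_le_pow_right (by norm_num) hi2⟩, by push_cast; ring⟩
  have bddM : BddBelow {c : ℝ | ∃ A : Finset ℝ, R ⊆ A ∧ c = expansionConstant A} := by
    refine ⟨0, ?_⟩
    rintro c ⟨A, hA, rfl⟩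
    exact Real.sInf_nonneg fun x hx => by linarith [hx.1]
  have part3 : minExpansionConstant R ≤ 4 :=
    le_trans (csInf_le bddM ⟨Q, hsub, rfl⟩) part2
  exact ⟨part1, part2, part3⟩
end

section
/- Let S be a finite δ-sparse subset of a metric space (X,d), meaning d(a,b) > δ for all distinct a,b ∈ S. Then for any point p ∈ X and any radius t > δ, the number of points of S in the closed ball B̄(p,t) satisfies |B̄(p,t) ∩ S| ≤ (c_m(S))^μ, where μ = ⌈log₂(4t/δ + 1)⌉. -/
open scoped Classical

section PackingAux

variable {X : Type*} [MetricSpace X]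

/-- The expansion property set for a finite set is nonempty. -/
lemma expansion_set_nonempty (A : Finset X) :
    {c : ℝ | 2 ≤ c ∧ ∀ p ∈ A, ∀ t : ℝ, 0 ≤ t →
      ((A.filter fun x => dist p x ≤ 2 * t).card : ℝ) ≤
        c * ((A.filter fun x => dist p x ≤ t).card : ℝ)}.Nonempty := by
  refine ⟨max 2 (A.card : ℝ), le_max_left _ _, fun p hp t ht => ?_⟩
  have h1 : (1 : ℝ) ≤ ((A.filter fun x => dist p x ≤ t).card : ℝ) := by
    have hpmem : p ∈ A.filter fun x => dist p x ≤ t := by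
      simp [Finset.mem_filter, hp, dist_self, ht]
    exact_mod_cast Finset.card_pos.mpr ⟨p, hpmem⟩
  have h2 : ((A.filter fun x => dist p x ≤ 2 * t).card : ℝ) ≤ (A.card : ℝ) := by
    exact_mod_cast Finset.card_le_card (Finset.filter_subset _ _)
  have h3 : (0 : ℝ) ≤ max 2 (A.card : ℝ) := le_trans (by norm_num) (le_max_left _ _)
  calc ((A.filter fun x => dist p x ≤ 2 * t).card : ℝ) ≤ (A.card : ℝ) := h2
    _ ≤ max 2 (A.card : ℝ) := le_max_right _ _
    _ = max 2 (A.card : ℝ) * 1 := (mul_one _).symm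
    _ ≤ _ := mul_le_mul_of_nonneg_left h1 h3

lemma two_le_expansionConstant (A : Finset X) : 2 ≤ expansionConstant A :=
  le_csInf (expansion_set_nonempty A) fun _ hc => hc.1

lemma ball_growth (A : Finset X) (c : ℝ) (hc : 0 ≤ c)
    (hprop : ∀ p ∈ A, ∀ t : ℝ, 0 ≤ t →
      ((A.filter fun x => dist p x ≤ 2 * t).card : ℝ) ≤
        c * ((A.filter fun x => dist p x ≤ t).card : ℝ))
    (q : X) (hq : q ∈ A) (r : ℝ) (hr : 0 ≤ r) (k : ℕ) :
    ((A.filter fun x => dist q x ≤ 2 ^ k * r).card : ℝ) ≤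
      c ^ k * ((A.filter fun x => dist q x ≤ r).card : ℝ) := by
  induction k with
  | zero => simp
  | succ k ih =>
    have h1 := hprop q hq (2 ^ k * r) (by positivity)
    have h2 : (2 : ℝ) ^ (k + 1) * r = 2 * (2 ^ k * r) := by ring
    calc ((A.filter fun x => dist q x ≤ 2 ^ (k + 1) * r).card : ℝ)
        = ((A.filter fun x => dist q x ≤ 2 * (2 ^ k * r)).card : ℝ) := by rw [h2]
      _ ≤ c * ((A.filter fun x => dist q x ≤ 2 ^ k * r).card : ℝ) := h1
      _ ≤ c * (c ^ k * ((A.filter fun x => dist q x ≤ r).card : ℝ)) :=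
          mul_le_mul_of_nonneg_left ih hc
      _ = c ^ (k + 1) * ((A.filter fun x => dist q x ≤ r).card : ℝ) := by ring

/-- Core counting bound for a single admissible pair `(A, c)`. -/
lemma packing_core (S : Finset X) (δ : ℝ) (hδ : 0 < δ)
    (hsparse : ∀ a ∈ S, ∀ b ∈ S, a ≠ b → δ < dist a b)
    (p : X) (t : ℝ) (ht : 0 < t) (n : ℕ)
    (hrad : 2 * t + δ / 2 ≤ 2 ^ n * (δ / 2))
    (A : Finset X) (hSA : S ⊆ A) (c : ℝ) (hc2 : 2 ≤ c)
    (hprop : ∀ p ∈ A, ∀ s : ℝ, 0 ≤ s →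
      ((A.filter fun x => dist p x ≤ 2 * s).card : ℝ) ≤
        c * ((A.filter fun x => dist p x ≤ s).card : ℝ)) :
    ((S.filter fun x => dist p x ≤ t).card : ℝ) ≤ c ^ n := by
  have hc0 : (0 : ℝ) ≤ c := le_trans (by norm_num) hc2
  set C := S.filter fun x => dist p x ≤ t with hCdef
  rcases C.eq_empty_or_nonempty with hCe | ⟨q0, hq0⟩
  · rw [hCe]; simpa using pow_nonneg hc0 n
  set B := A.filter fun x => dist p x ≤ t + δ / 2 with hBdef
  have hmemC : ∀ q ∈ C, q ∈ S ∧ dist p q ≤ t := by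
    intro q hq; exact Finset.mem_filter.mp hq
  -- each big ball is bounded by c^n times a small ball
  have claim1 : ∀ q ∈ C, ((B.card : ℝ)) ≤
      c ^ n * ((A.filter fun x => dist q x ≤ δ / 2).card : ℝ) := by
    intro q hq
    obtain ⟨hqS, hqd⟩ := hmemC q hq
    have hsub : B ⊆ A.filter fun x => dist q x ≤ 2 ^ n * (δ / 2) := by
      intro x hx
      obtain ⟨hxA, hxd⟩ := Finset.mem_filter.mp hx
      refine Finset.mem_filter.mpr ⟨hxA, ?_⟩
      calc dist q x ≤ dist q p + dist p x := dist_triangle _ _ _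
        _ ≤ t + (t + δ / 2) := by
            have : dist q p = dist p q := dist_comm _ _
            linarith [hxd]
        _ ≤ 2 ^ n * (δ / 2) := by linarith
    have h1 : ((B.card : ℝ)) ≤
        ((A.filter fun x => dist q x ≤ 2 ^ n * (δ / 2)).card : ℝ) := by
      exact_mod_cast Finset.card_le_card hsub
    have h2 := ball_growth A c hc0 hprop q (hSA hqS) (δ / 2) (by linarith) n
    linarith
  -- small balls are disjoint and inside B
  have claim2 : (∑ q ∈ C, ((A.filter fun x => dist q x ≤ δ / 2).card : ℝ)) ≤ (B.card : ℝ) := by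
    have hdisj : ∀ q₁ ∈ C, ∀ q₂ ∈ C, q₁ ≠ q₂ →
        Disjoint (A.filter fun x => dist q₁ x ≤ δ / 2)
          (A.filter fun x => dist q₂ x ≤ δ / 2) := by
      intro q₁ hq₁ q₂ hq₂ hne
      rw [Finset.disjoint_left]
      intro x hx1 hx2
      obtain ⟨_, hd1⟩ := Finset.mem_filter.mp hx1
      obtain ⟨_, hd2⟩ := Finset.mem_filter.mp hx2
      have hlt := hsparse q₁ (hmemC q₁ hq₁).1 q₂ (hmemC q₂ hq₂).1 hne
      have : dist q₁ q₂ ≤ dist q₁ x + dist x q₂ := dist_triangle _ _ _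
      have hxq2 : dist x q₂ = dist q₂ x := dist_comm _ _
      linarith
    have hcard : ∑ q ∈ C, (A.filter fun x => dist q x ≤ δ / 2).card
        = (C.biUnion fun q => A.filter fun x => dist q x ≤ δ / 2).card :=
      (Finset.card_biUnion hdisj).symm
    have hsub : (C.biUnion fun q => A.filter fun x => dist q x ≤ δ / 2) ⊆ B := by
      intro x hx
      obtain ⟨q, hq, hxq⟩ := Finset.mem_biUnion.mp hx
      obtain ⟨hxA, hxd⟩ := Finset.mem_filter.mp hxq
      refine Finset.mem_filter.mpr ⟨hxA, ?_⟩
      calc dist p x ≤ dist p q + dist q x := dist_triangle _ _ _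
        _ ≤ t + δ / 2 := add_le_add (hmemC q hq).2 hxd
    have : (∑ q ∈ C, (A.filter fun x => dist q x ≤ δ / 2).card)
        ≤ B.card := hcard ▸ Finset.card_le_card hsub
    push_cast
    exact_mod_cast this
  have hB1 : (1 : ℝ) ≤ (B.card : ℝ) := by
    have : q0 ∈ B := by
      obtain ⟨hq0S, hq0d⟩ := hmemC q0 hq0
      exact Finset.mem_filter.mpr ⟨hSA hq0S, by linarith⟩
    exact_mod_cast Finset.card_pos.mpr ⟨q0, this⟩
  have key : (C.card : ℝ) * (B.card : ℝ) ≤ c ^ n * (B.card : ℝ) := by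
    have h1 : (C.card : ℝ) * (B.card : ℝ) = ∑ _q ∈ C, (B.card : ℝ) := by
      rw [Finset.sum_const, nsmul_eq_mul]
    have h2 : (∑ q ∈ C, (B.card : ℝ)) ≤
        ∑ q ∈ C, c ^ n * ((A.filter fun x => dist q x ≤ δ / 2).card : ℝ) :=
      Finset.sum_le_sum claim1
    have h3 : (∑ q ∈ C, c ^ n * ((A.filter fun x => dist q x ≤ δ / 2).card : ℝ))
        = c ^ n * ∑ q ∈ C, ((A.filter fun x => dist q x ≤ δ / 2).card : ℝ) := by
      rw [Finset.mul_sum]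
    have h4 : c ^ n * (∑ q ∈ C, ((A.filter fun x => dist q x ≤ δ / 2).card : ℝ))
        ≤ c ^ n * (B.card : ℝ) :=
      mul_le_mul_of_nonneg_left claim2 (pow_nonneg hc0 n)
    linarith [h1, h2, h3 ▸ h4]
  have hBpos : (0 : ℝ) < (B.card : ℝ) := by linarith
  exact le_of_mul_le_mul_right key hBpos

end PackingAux

/-- Packing lemma: if `S` is a finite `δ`-sparse set (all pairwise distances exceed `δ`),
then for any point `p` and any radius `t > δ`, the closed ball `B̄(p,t)` contains at most
`(c_m(S))^μ` points of `S`, where `μ = ⌈log₂(4t/δ + 1)⌉`. -/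
theorem packing_lemma {X : Type*} [MetricSpace X] (S : Finset X) (δ : ℝ) (hδ : 0 < δ)
    (hsparse : ∀ a ∈ S, ∀ b ∈ S, a ≠ b → δ < dist a b)
    (p : X) (t : ℝ) (ht : δ < t) :
    ((S.filter fun x => dist p x ≤ t).card : ℝ) ≤
      minExpansionConstant S ^ (⌈Real.logb 2 (4 * t / δ + 1)⌉ : ℤ) := by
  have hm2 : 2 ≤ minExpansionConstant S := by
    have hne : {c : ℝ | ∃ A : Finset X, S ⊆ A ∧ c = expansionConstant A}.Nonempty :=
      ⟨expansionConstant S, S, Finset.Subset.refl S, rfl⟩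
    show 2 ≤ sInf {c : ℝ | ∃ A : Finset X, S ⊆ A ∧ c = expansionConstant A}
    apply le_csInf hne
    rintro c ⟨A, _, rfl⟩
    exact two_le_expansionConstant A
  set m := minExpansionConstant S with hm
  set μ : ℤ := ⌈Real.logb 2 (4 * t / δ + 1)⌉ with hμ
  have ht0 : 0 < t := lt_trans hδ ht
  have hx1 : (1 : ℝ) < 4 * t / δ + 1 := by
    have : 0 < 4 * t / δ := by positivity
    linarith
  have hμpos : 0 < μ := Int.ceil_pos.mpr (Real.logb_pos one_lt_two hx1)
  set n : ℕ := μ.toNat with hn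
  have hμn : (μ : ℤ) = (n : ℤ) := (Int.toNat_of_nonneg hμpos.le).symm
  -- 2^n ≥ 4t/δ + 1
  have hpow : 4 * t / δ + 1 ≤ (2 : ℝ) ^ n := by
    have h1 : Real.logb 2 (4 * t / δ + 1) ≤ (n : ℝ) := by
      have := Int.le_ceil (Real.logb 2 (4 * t / δ + 1))
      have hcast : ((μ : ℤ) : ℝ) = (n : ℝ) := by exact_mod_cast hμn
      linarith [this, hcast.le, hcast.ge]
    calc 4 * t / δ + 1 = (2 : ℝ) ^ Real.logb 2 (4 * t / δ + 1) :=
          (Real.rpow_logb (by norm_num) (by norm_num) (by linarith)).symm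
      _ ≤ (2 : ℝ) ^ (n : ℝ) :=
          Real.rpow_le_rpow_of_exponent_le (by norm_num) h1
      _ = (2 : ℝ) ^ n := Real.rpow_natCast 2 n
  have hrad : 2 * t + δ / 2 ≤ 2 ^ n * (δ / 2) := by
    have h := mul_le_mul_of_nonneg_right hpow (by linarith : (0:ℝ) ≤ δ / 2)
    have heq : (4 * t / δ + 1) * (δ / 2) = 2 * t + δ / 2 := by
      field_simp; ring
    linarith [heq ▸ h]
  -- for every ε > 0, the count is at most (m + ε)^n
  have hε : ∀ ε : ℝ, 0 < ε →
      ((S.filter fun x => dist p x ≤ t).card : ℝ) ≤ (m + ε) ^ n := by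
    intro ε hε
    have hne : {c : ℝ | ∃ A : Finset X, S ⊆ A ∧ c = expansionConstant A}.Nonempty :=
      ⟨expansionConstant S, S, Finset.Subset.refl S, rfl⟩
    obtain ⟨c', hc'mem, hc'lt⟩ := exists_lt_of_csInf_lt hne
      (show minExpansionConstant S < m + ε / 2 by rw [← hm]; linarith)
    obtain ⟨A, hSA, rfl⟩ := hc'mem
    obtain ⟨c, hcmem, hclt⟩ := exists_lt_of_csInf_lt (expansion_set_nonempty A)
      (show expansionConstant A < expansionConstant A + ε / 2 by linarith)
    obtain ⟨hc2, hprop⟩ := hcmem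
    have hbound := packing_core S δ hδ hsparse p t ht0 n hrad A hSA c hc2 hprop
    have hcm : c ≤ m + ε := by linarith
    calc ((S.filter fun x => dist p x ≤ t).card : ℝ) ≤ c ^ n := hbound
      _ ≤ (m + ε) ^ n := pow_le_pow_left₀ (by linarith) hcm n
  -- take the limit ε → 0+
  have hlim : ((S.filter fun x => dist p x ≤ t).card : ℝ) ≤ m ^ n := by
    have htend : Filter.Tendsto (fun ε : ℝ => (m + ε) ^ n)
        (nhdsWithin 0 (Set.Ioi 0)) (nhds ((m + 0) ^ n)) := by
      apply Filter.Tendsto.mono_left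
      · exact ((continuous_const.add continuous_id).pow n).tendsto 0
      · exact nhdsWithin_le_nhds
    rw [add_zero] at htend
    refine ge_of_tendsto htend ?_
    filter_upwards [self_mem_nhdsWithin] with ε (hεpos : ε ∈ Set.Ioi 0)
    exact hε ε hεpos
  rw [hμn, zpow_natCast]
  exact hlim
end

section
/- Let R be a finite subset of a metric space (X,d) with a compressed cover tree T(R). Then for every node p ∈ T(R) and every level i ∈ ℤ, the number of children of p whose level equals i is at most (c_m(R))^4, where c_m(R) is the minimized expansion constant of R. -/
open scoped Classical

lemma expansionConstant_spec {X : Type*} [MetricSpace X] (A : Finset X) :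
    2 ≤ expansionConstant A ∧ ∀ p ∈ A, ∀ t : ℝ, 0 ≤ t →
      ((A.filter fun x => dist p x ≤ 2 * t).card : ℝ) ≤
        expansionConstant A * ((A.filter fun x => dist p x ≤ t).card : ℝ) := by
  set S := {c : ℝ | 2 ≤ c ∧ ∀ p ∈ A, ∀ t : ℝ, 0 ≤ t →
    ((A.filter fun x => dist p x ≤ 2 * t).card : ℝ) ≤
      c * ((A.filter fun x => dist p x ≤ t).card : ℝ)} with hS
  have hone : ∀ p ∈ A, ∀ t : ℝ, 0 ≤ t →
      (1 : ℝ) ≤ ((A.filter fun x => dist p x ≤ t).card : ℝ) := by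
    intro p hpA t ht
    have : p ∈ A.filter fun x => dist p x ≤ t := by
      simp [Finset.mem_filter, hpA, dist_self, ht]
    have := Finset.card_pos.mpr ⟨p, this⟩
    exact_mod_cast this
  have hne : S.Nonempty := by
    refine ⟨max 2 (A.card : ℝ), ?_, ?_⟩
    · exact le_max_left _ _
    · intro p hpA t ht
      have h1 : ((A.filter fun x => dist p x ≤ 2 * t).card : ℝ) ≤ (A.card : ℝ) := by
        exact_mod_cast Finset.card_filter_le _ _
      have h2 := hone p hpA t ht
      calc ((A.filter fun x => dist p x ≤ 2 * t).card : ℝ)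
          ≤ (A.card : ℝ) := h1
        _ ≤ max 2 (A.card : ℝ) := le_max_right _ _
        _ = max 2 (A.card : ℝ) * 1 := (mul_one _).symm
        _ ≤ max 2 (A.card : ℝ) * ((A.filter fun x => dist p x ≤ t).card : ℝ) := by
            apply mul_le_mul_of_nonneg_left h2
            exact le_trans (by norm_num) (le_max_left 2 _)
  have hbdd : BddBelow S := ⟨2, fun c hc => hc.1⟩
  constructor
  · exact le_csInf hne (fun c hc => hc.1)
  · intro p hpA t ht
    have hb := hone p hpA t ht
    have hbpos : (0 : ℝ) < ((A.filter fun x => dist p x ≤ t).card : ℝ) := lt_of_lt_of_le one_pos hb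
    rw [← div_le_iff₀ hbpos] at *
    apply le_csInf hne
    intro c hc
    rw [div_le_iff₀ hbpos]
    exact hc.2 p hpA t ht

lemma CCT.width_bound_aux {X : Type*} [MetricSpace X] {R : Finset X}
    (T : CCT R) (p : X) (hp : p ∈ R) (i : ℤ) (A : Finset X) (hRA : R ⊆ A) :
    (((T.children p).filter fun a => T.level a = i).card : ℝ) ≤
      expansionConstant A ^ 4 := by
  obtain ⟨hc2, hexp⟩ := expansionConstant_spec A
  set c := expansionConstant A with hcdef
  have hc0 : (0 : ℝ) ≤ c := le_trans (by norm_num) hc2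
  set S := (T.children p).filter fun a => T.level a = i with hSdef
  rcases Finset.eq_empty_or_nonempty S with hSe | hSne
  · rw [hSe]
    simp only [Finset.card_empty, Nat.cast_zero]
    positivity
  have hr2 : (0 : ℝ) < (2 : ℝ) ^ i := zpow_pos (by norm_num) i
  set r2 : ℝ := (2 : ℝ) ^ i with hr2def
  -- basic facts about S
  have hSR : ∀ q ∈ S, q ∈ R := by
    intro q hq
    rw [hSdef, Finset.mem_filter, CCT.children, Finset.mem_insert] at hq
    rcases hq.1 with h | h
    · exact h ▸ hp
    · exact (Finset.mem_filter.mp h).1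
  have hSlev : ∀ q ∈ S, i ≤ T.level q := by
    intro q hq
    rw [hSdef, Finset.mem_filter] at hq
    exact le_of_eq hq.2.symm
  have hdistp : ∀ q ∈ S, dist q p ≤ 2 * r2 := by
    intro q hq
    rw [hSdef, Finset.mem_filter, CCT.children, Finset.mem_insert] at hq
    rcases hq.1 with h | h
    · rw [h, dist_self]; positivity
    · rw [Finset.mem_filter] at h
      have hcov := T.covering q h.1 h.2.1
      rw [h.2.2, hq.2] at hcov
      calc dist q p ≤ (2 : ℝ) ^ (i + 1) := hcov
        _ = 2 * r2 := by rw [hr2def, zpow_add_one₀ (by norm_num : (2:ℝ) ≠ 0)]; ring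
  have hsep : ∀ q ∈ S, ∀ q' ∈ S, q ≠ q' → r2 < dist q q' := by
    intro q hq q' hq' hne
    exact T.separation i q (hSR q hq) q' (hSR q' hq') hne (hSlev q hq) (hSlev q' hq')
  -- the small radius
  set s : ℝ := 4 * r2 / 15 with hsdef
  have hs0 : 0 ≤ s := by positivity
  set B : X → Finset X := fun q => A.filter fun x => dist q x ≤ s with hBdef
  -- disjointness
  have hdisj : ∀ q ∈ S, ∀ q' ∈ S, q ≠ q' → Disjoint (B q) (B q') := by
    intro q hq q' hq' hne
    rw [Finset.disjoint_left]
    intro x hx hx'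
    rw [hBdef, Finset.mem_filter] at hx hx'
    have : dist q q' ≤ 2 * s := by
      calc dist q q' ≤ dist q x + dist q' x := dist_triangle_right _ _ _
        _ ≤ s + s := add_le_add hx.2 hx'.2
        _ = 2 * s := by ring
    have h2 := hsep q hq q' hq' hne
    rw [hsdef] at this
    linarith
  -- choose minimizing element
  obtain ⟨q0, hq0S, hq0min⟩ := Finset.exists_min_image S (fun q => (B q).card) hSne
  have hq0A : q0 ∈ A := hRA (hSR q0 hq0S)
  -- each small ball is inside the big ball around q0
  have hsub : S.biUnion B ⊆ A.filter fun x => dist q0 x ≤ 2 * (2 * (2 * (2 * s))) := by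
    intro x hx
    rw [Finset.mem_biUnion] at hx
    obtain ⟨q, hqS, hxB⟩ := hx
    rw [hBdef, Finset.mem_filter] at hxB
    rw [Finset.mem_filter]
    refine ⟨hxB.1, ?_⟩
    calc dist q0 x ≤ dist q0 p + dist p q + dist q x := dist_triangle4 _ _ _ _
      _ ≤ 2 * r2 + 2 * r2 + s := by
          have h1 := hdistp q0 hq0S
          have h2 := hdistp q hqS
          have h3 : dist p q = dist q p := dist_comm p q
          linarith [hxB.2]
      _ = 2 * (2 * (2 * (2 * s))) := by rw [hsdef]; ring
  -- counting
  have hcount : S.card * (B q0).card ≤ (A.filter fun x => dist q0 x ≤ 2 * (2 * (2 * (2 * s)))).card := by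
    calc S.card * (B q0).card ≤ ∑ q ∈ S, (B q).card := by
          have := Finset.card_nsmul_le_sum S (fun q => (B q).card) ((B q0).card)
            (fun q hq => hq0min q hq)
          simpa [smul_eq_mul] using this
      _ = (S.biUnion B).card := (Finset.card_biUnion hdisj).symm
      _ ≤ _ := Finset.card_le_card hsub
  -- expansion chain
  have hchain : ((A.filter fun x => dist q0 x ≤ 2 * (2 * (2 * (2 * s)))).card : ℝ)
      ≤ c ^ 4 * ((B q0).card : ℝ) := by
    have e1 := hexp q0 hq0A s hs0
    have e2 := hexp q0 hq0A (2 * s) (by positivity)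
    have e3 := hexp q0 hq0A (2 * (2 * s)) (by positivity)
    have e4 := hexp q0 hq0A (2 * (2 * (2 * s))) (by positivity)
    rw [hBdef]
    calc ((A.filter fun x => dist q0 x ≤ 2 * (2 * (2 * (2 * s)))).card : ℝ)
        ≤ c * ((A.filter fun x => dist q0 x ≤ 2 * (2 * (2 * s))).card : ℝ) := e4
      _ ≤ c * (c * ((A.filter fun x => dist q0 x ≤ 2 * (2 * s)).card : ℝ)) :=
          mul_le_mul_of_nonneg_left e3 hc0
      _ ≤ c * (c * (c * ((A.filter fun x => dist q0 x ≤ 2 * s).card : ℝ))) :=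
          mul_le_mul_of_nonneg_left (mul_le_mul_of_nonneg_left e2 hc0) hc0
      _ ≤ c * (c * (c * (c * ((A.filter fun x => dist q0 x ≤ s).card : ℝ)))) :=
          mul_le_mul_of_nonneg_left
            (mul_le_mul_of_nonneg_left (mul_le_mul_of_nonneg_left e1 hc0) hc0) hc0
      _ = c ^ 4 * ((A.filter fun x => dist q0 x ≤ s).card : ℝ) := by ring
  -- B q0 is nonempty
  have hb1 : (1 : ℝ) ≤ ((B q0).card : ℝ) := by
    have : q0 ∈ B q0 := by
      rw [hBdef, Finset.mem_filter]
      exact ⟨hq0A, by rw [dist_self]; exact hs0⟩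
    have := Finset.card_pos.mpr ⟨q0, this⟩
    exact_mod_cast this
  have hbpos : (0 : ℝ) < ((B q0).card : ℝ) := lt_of_lt_of_le one_pos hb1
  have hfinal : (S.card : ℝ) * ((B q0).card : ℝ) ≤ c ^ 4 * ((B q0).card : ℝ) := by
    calc (S.card : ℝ) * ((B q0).card : ℝ)
        = ((S.card * (B q0).card : ℕ) : ℝ) := by push_cast; ring
      _ ≤ ((A.filter fun x => dist q0 x ≤ 2 * (2 * (2 * (2 * s)))).card : ℝ) := by
          exact_mod_cast hcount
      _ ≤ c ^ 4 * ((B q0).card : ℝ) := hchain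
  exact le_of_mul_le_mul_right hfinal hbpos

/-- Width bound: in a compressed cover tree `T(R)`, any node `p` has at most
`(c_m(R))^4` children at every level `i`. -/
theorem CCT.width_bound {X : Type*} [MetricSpace X] {R : Finset X}
    (T : CCT R) (p : X) (hp : p ∈ R) (i : ℤ) :
    (((T.children p).filter fun a => T.level a = i).card : ℝ) ≤
      minExpansionConstant R ^ 4 := by
  set M := {c : ℝ | ∃ A : Finset X, R ⊆ A ∧ c = expansionConstant A} with hM
  have hMne : M.Nonempty := ⟨expansionConstant R, R, le_refl R, rfl⟩
  have hm2 : (2 : ℝ) ≤ minExpansionConstant R := le_csInf hMne (by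
    rintro c ⟨A, hRA, rfl⟩
    exact (expansionConstant_spec A).1)
  have hm0 : (0 : ℝ) ≤ minExpansionConstant R := le_trans (by norm_num) hm2
  set N : ℝ := (((T.children p).filter fun a => T.level a = i).card : ℝ) with hN
  have hN0 : 0 ≤ N := by positivity
  by_contra hcon
  push_neg at hcon
  have hmlt : minExpansionConstant R < N ^ ((1:ℝ)/4) := by
    have h1 : (minExpansionConstant R ^ 4 : ℝ) ^ ((1:ℝ)/4) < N ^ ((1:ℝ)/4) :=
      Real.rpow_lt_rpow (by positivity) hcon (by norm_num)
    rwa [← Real.rpow_natCast (minExpansionConstant R) 4, ← Real.rpow_mul hm0,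
      show ((4:ℕ):ℝ) * ((1:ℝ)/4) = 1 by norm_num, Real.rpow_one] at h1
  obtain ⟨c, hcM, hclt⟩ := exists_lt_of_csInf_lt hMne hmlt
  obtain ⟨A, hRA, rfl⟩ := hcM
  have hkey := CCT.width_bound_aux T p hp i A hRA
  have hc0 : (0:ℝ) ≤ expansionConstant A := le_trans (by norm_num) (expansionConstant_spec A).1
  have hlt : expansionConstant A ^ 4 < N := by
    have h := Real.rpow_lt_rpow hc0 hclt (by norm_num : (0:ℝ) < 4)
    rw [← Real.rpow_mul hN0, show ((1:ℝ)/4) * 4 = 1 by norm_num, Real.rpow_one] at h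
    calc expansionConstant A ^ 4 = expansionConstant A ^ ((4:ℕ):ℝ) :=
          (Real.rpow_natCast _ 4).symm
      _ = expansionConstant A ^ (4:ℝ) := by norm_num
      _ < N := h
  rw [← hN] at hkey
  linarith
end

section
/- Let R be a finite set in a metric space with a compressed cover tree T(R). For each node q ∈ R define the set of essential levels E(q, T(R)) = {l(q)+1} ∪ {j+1 : j ∈ ℤ and some non-root node whose parent is q has level j}. Then ∑_{p ∈ R} |E(p, T(R))| ≤ 2 · |R|. -/
open scoped Classical

/-- The set of essential levels of a node `q`:
`E(q, T(R)) = {l(q)+1} ∪ {j+1 : some non-root node with parent q has level j}`. -/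
noncomputable def CCT.essLevels {X : Type*} [MetricSpace X] {R : Finset X}
    (T : CCT R) (q : X) : Finset ℤ :=
  insert (T.level q + 1)
    ((R.filter fun a => a ≠ T.root ∧ T.parent a = q).image fun a => T.level a + 1)

/-- Number of essential levels: `∑_{p ∈ R} |E(p, T(R))| ≤ 2 · |R|`. -/
theorem CCT.sum_essLevels_le {X : Type*} [MetricSpace X] {R : Finset X} (T : CCT R) :
    ∑ p ∈ R, (T.essLevels p).card ≤ 2 * R.card := by
  have h1 : ∀ p ∈ R, (T.essLevels p).card ≤
      1 + (R.filter fun a => a ≠ T.root ∧ T.parent a = p).card := by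
    intro p _
    calc (T.essLevels p).card
        ≤ ((R.filter fun a => a ≠ T.root ∧ T.parent a = p).image
            fun a => T.level a + 1).card + 1 := Finset.card_insert_le _ _
      _ ≤ (R.filter fun a => a ≠ T.root ∧ T.parent a = p).card + 1 :=
          Nat.add_le_add_right (Finset.card_image_le) 1
      _ = 1 + (R.filter fun a => a ≠ T.root ∧ T.parent a = p).card := Nat.add_comm _ _
  have h2 : ∑ p ∈ R, (R.filter fun a => a ≠ T.root ∧ T.parent a = p).card ≤ R.card := by
    have hdisj : ∀ p ∈ R, ∀ q ∈ R, p ≠ q →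
        Disjoint (R.filter fun a => a ≠ T.root ∧ T.parent a = p)
          (R.filter fun a => a ≠ T.root ∧ T.parent a = q) := by
      intro p _ q _ hpq
      refine Finset.disjoint_left.2 ?_
      intro a ha hb
      simp only [Finset.mem_filter] at ha hb
      exact hpq (ha.2.2 ▸ hb.2.2)
    rw [← Finset.card_biUnion hdisj]
    apply Finset.card_le_card
    intro a ha
    rcases Finset.mem_biUnion.1 ha with ⟨p, _, hp⟩
    exact (Finset.mem_filter.1 hp).1
  calc ∑ p ∈ R, (T.essLevels p).card
      ≤ ∑ p ∈ R, (1 + (R.filter fun a => a ≠ T.root ∧ T.parent a = p).card) :=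
        Finset.sum_le_sum h1
    _ = R.card + ∑ p ∈ R, (R.filter fun a => a ≠ T.root ∧ T.parent a = p).card := by
        rw [Finset.sum_add_distrib, Finset.sum_const, smul_eq_mul, mul_one]
    _ ≤ R.card + R.card := Nat.add_le_add_left h2 _
    _ = 2 * R.card := (Nat.two_mul _).symm
end
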